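/- arXiv:math/0406489 — 7 statements merged into one kernel-verified Lean document; each statement's English description precedes it below -/
import Mathlib

section
/- Under the hypotheses R_t B_0 = B_0 R_t = 0 and R_t B_1 + A_0 B_0 = I, setting Q_t = -R_t B_1 = A_0 B_0 - I and C = -R_t B_2 + A_1 B_0, one has Q_t C Q_t = -C Q_t. -/
/-- With `Qt := -Rt * B1` and `C := -Rt * B2 + A1 * B0`, under the hypotheses
`Rt * B0 = 0`, `B0 * Rt = 0`, `Rt * B1 + A0 * B0 = 1`, one has
`Qt * C * Qt = -(C * Qt)`. -/
theorem stmt2 {m : ℕ} (Rt A0 A1 B0 B1 B2 : Matrix (Fin m) (Fin m) ℂ)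
    (h1 : Rt * B0 = 0) (h2 : B0 * Rt = 0) (h3 : Rt * B1 + A0 * B0 = 1) :
    (-(Rt * B1)) * (-(Rt * B2) + A1 * B0) * (-(Rt * B1))
      = -((-(Rt * B2) + A1 * B0) * (-(Rt * B1))) := by
  have hq : Rt * B1 = 1 - A0 * B0 := eq_sub_of_add_eq h3
  have h5 : A1 * B0 * (Rt * B1) = 0 := by
    rw [mul_assoc A1, ← mul_assoc B0, h2, zero_mul, mul_zero]
  have e1 : (-(Rt * B2) + A1 * B0) * (-(Rt * B1)) = Rt * B2 * (Rt * B1) := by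
    calc (-(Rt * B2) + A1 * B0) * (-(Rt * B1))
        = Rt * B2 * (Rt * B1) - A1 * B0 * (Rt * B1) := by noncomm_ring
      _ = Rt * B2 * (Rt * B1) := by rw [h5, sub_zero]
  have h6 : A0 * B0 * (Rt * B2 * (Rt * B1)) = 0 := by
    rw [← mul_assoc, mul_assoc A0, ← mul_assoc B0, h2, zero_mul, mul_zero, zero_mul]
  rw [mul_assoc, e1]; nth_rewrite 1 [hq]
  calc -(1 - A0 * B0) * (Rt * B2 * (Rt * B1))
      = -(Rt * B2 * (Rt * B1)) + A0 * B0 * (Rt * B2 * (Rt * B1)) := by noncomm_ring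
    _ = -(Rt * B2 * (Rt * B1)) := by rw [h6, add_zero]
end

section
/- If S' and S'' solve the same Sylvester equation with data (F', G') and (F'', G'') respectively, where F'' = F' D_c and G'' = D_r G' for invertible diagonal matrices D_c, D_r, and A_P, A_Z are diagonal with disjoint diagonal entries, then S'' = D_r S' D_c. -/
/-- If `S'` and `S''` solve the Sylvester equations with data `(F', G')` and
`(F'', G'') = (F' D_c, D_r G')` for invertible diagonal `D_c, D_r`, and the
diagonal matrices `A_P = diag a`, `A_Z = diag b` have disjoint diagonal
entries, then `S'' = D_r S' D_c`. -/
theorem stmt13 {m n : ℕ} (a b : Fin n → ℂ) (hab : ∀ i j, b i ≠ a j)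
    (F' : Matrix (Fin m) (Fin n) ℂ) (G' : Matrix (Fin n) (Fin m) ℂ)
    (dc dr : Fin n → ℂ) (hdc : ∀ i, dc i ≠ 0) (hdr : ∀ i, dr i ≠ 0)
    (S' S'' : Matrix (Fin n) (Fin n) ℂ)
    (hS' : Matrix.diagonal b * S' - S' * Matrix.diagonal a = G' * F')
    (hS'' : Matrix.diagonal b * S'' - S'' * Matrix.diagonal a
      = (Matrix.diagonal dr * G') * (F' * Matrix.diagonal dc)) :
    S'' = Matrix.diagonal dr * S' * Matrix.diagonal dc := by
  have h1 : ∀ i j, (b i - a j) * S' i j = (G' * F') i j := by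
    intro i j
    have := congrFun (congrFun hS' i) j
    simp only [Matrix.sub_apply, Matrix.diagonal_mul, Matrix.mul_diagonal] at this
    linear_combination this
  have h2 : ∀ i j, (b i - a j) * S'' i j = dr i * (G' * F') i j * dc j := by
    intro i j
    have := congrFun (congrFun hS'' i) j
    simp only [Matrix.sub_apply, Matrix.diagonal_mul, Matrix.mul_diagonal,
      Matrix.mul_assoc] at this
    rw [← Matrix.mul_assoc, Matrix.mul_diagonal] at this
    linear_combination this
  ext i j
  have hne : b i - a j ≠ 0 := sub_ne_zero.mpr (hab i j)
  have := h2 i j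
  rw [← h1 i j] at this
  have : (b i - a j) * S'' i j = (b i - a j) * (dr i * S' i j * dc j) := by
    rw [this]; ring
  have := mul_left_cancel₀ hne this
  simpa [Matrix.diagonal_mul, Matrix.mul_diagonal, mul_comm, mul_assoc, mul_left_comm] using this
end

section
/- Cauchy determinant formula: for pairwise distinct z₁,…,z_n and pairwise distinct t₁,…,t_n with z_ℓ ≠ t_k for all ℓ,k, the determinant of the matrix (1/(z_ℓ - t_k))_{ℓ,k} equals (∏_{p<q}(z_p - z_q)(t_p - t_q)) / ∏_{ℓ,k}(z_ℓ - t_k), up to sign (−1)^{n(n−1)/2}. In particular this determinant is nonzero. -/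
/-!
Put `p = ∏ⱼ (X - tⱼ)` and `qₖ = p / (X - tₖ)`. Then `1 / (z_ℓ - tₖ) = qₖ(z_ℓ) / p(z_ℓ)`, so the
Cauchy matrix is a row rescaling of `(qₖ(z_ℓ))`. As `deg qₖ < n`, this matrix is `V(z) A` with
`V` the Vandermonde matrix and `A` the coefficient matrix of the `qₖ`, while evaluating at the
nodes instead gives the diagonal matrix `V(t) A = diag (qₖ(tₖ))`. Hence
`det A = ∏ₖ ∏_{j ≠ k} (tₖ - tⱼ) / det V(t) = ∏_{i < j} (tᵢ - tⱼ)`, and the Vandermonde formula for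
`det V(z)` finishes the computation.
-/

open Finset Polynomial Matrix Lagrange

theorem Finset.prod_prod_Ioi_neg {M : Type*} [CommMonoid M] [HasDistribNeg M] {n : ℕ}
    (f : Fin n → Fin n → M) :
    ∏ i, ∏ j ∈ Ioi i, -f i j = (-1) ^ (n * (n - 1) / 2) * ∏ i, ∏ j ∈ Ioi i, f i j := by
  have hcard : ∑ i : Fin n, #(Ioi i) = n * (n - 1) / 2 := by
    simp_rw [Fin.card_Ioi]
    rw [Fin.sum_univ_eq_sum_range (fun i => n - 1 - i), sum_range_reflect (fun j => j) n,
      sum_range_id]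
  simp_rw [prod_neg, prod_mul_distrib, prod_pow_eq_pow_sum, hcard]

theorem Lagrange.inv_sub_eq_eval_nodal_erase_div {K ι : Type*} [Field K] [DecidableEq ι]
    {s : Finset ι} {v : ι → K} {i : ι} (hi : i ∈ s) {x : K} (hx : ∀ j ∈ s, x ≠ v j) :
    (x - v i)⁻¹ = (nodal (s.erase i) v).eval x / (nodal s v).eval x := by
  have hs := eval_nodal_not_at_node hx
  rw [nodal_eq_mul_nodal_erase hi, eval_mul] at hs ⊢
  simp only [eval_sub, eval_X, eval_C] at hs ⊢
  field_simp [right_ne_zero_of_mul hs]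

namespace Matrix

variable {R : Type*} [CommRing R] {n : ℕ}

theorem eval_matrixOfPolynomials_eq_vandermonde_mul_of_natDegree_lt (v : Fin n → R)
    (q : Fin n → R[X]) (hq : ∀ k, (q k).natDegree < n) :
    of (fun ℓ k => (q k).eval (v ℓ)) =
      vandermonde v * of (fun (i k : Fin n) => (q k).coeff i) := by
  ext ℓ k
  rw [of_apply, mul_apply, eval_eq_sum_range' (hq k), ← Fin.sum_univ_eq_sum_range
    (fun i => (q k).coeff i * v ℓ ^ i)]
  simp only [vandermonde_apply, of_apply, mul_comm]

theorem det_eval_mul_det_vandermonde (v w : Fin n → R) (q : Fin n → R[X])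
    (hq : ∀ k, (q k).natDegree < n) :
    (of fun ℓ k => (q k).eval (v ℓ)).det * (vandermonde w).det =
      (vandermonde v).det * (of fun m k => (q k).eval (w m)).det := by
  simp only [eval_matrixOfPolynomials_eq_vandermonde_mul_of_natDegree_lt _ q hq, det_mul]
  ring

theorem det_eval_nodal_erase_at_nodes (t : Fin n → R) :
    (of fun m k => (nodal (univ.erase k) t).eval (t m)).det =
      ∏ k, ∏ j ∈ univ.erase k, (t k - t j) := by
  have hdiag : (of fun m k => (nodal (univ.erase k) t).eval (t m)) =
      diagonal fun k => (nodal (univ.erase k) t).eval (t k) := by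
    ext m k
    rcases eq_or_ne m k with rfl | hmk
    · simp
    · rw [of_apply, diagonal_apply_ne _ hmk,
        eval_nodal_at_node (mem_erase.mpr ⟨hmk, mem_univ m⟩)]
  rw [hdiag, det_diagonal]
  simp only [eval_nodal]

theorem prod_prod_erase_sub_eq_det_vandermonde_mul (t : Fin n → R) :
    ∏ k, ∏ j ∈ univ.erase k, (t k - t j) =
      (∏ i, ∏ j ∈ Ioi i, (t i - t j)) * (vandermonde t).det := by
  rw [det_vandermonde, ← prod_mul_distrib]
  simp_rw [← prod_mul_distrib, ← compl_singleton]
  exact (prod_prod_Ioi_mul_eq_prod_prod_off_diag fun a b => t b - t a).symm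

theorem det_eval_nodal_erase_of_injective [IsDomain R] (z t : Fin n → R)
    (ht : Function.Injective t) :
    (of fun ℓ k => (nodal (univ.erase k) t).eval (z ℓ)).det =
      (vandermonde z).det * ∏ i, ∏ j ∈ Ioi i, (t i - t j) := by
  have hdeg : ∀ k, (nodal (univ.erase k) t).natDegree < n := fun k => by
    rw [natDegree_nodal, card_erase_of_mem (mem_univ k), card_univ, Fintype.card_fin]
    exact Nat.sub_lt k.pos one_pos
  have key := det_eval_mul_det_vandermonde z t _ hdeg
  rw [det_eval_nodal_erase_at_nodes, prod_prod_erase_sub_eq_det_vandermonde_mul] at key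
  exact mul_right_cancel₀ (det_vandermonde_ne_zero_iff.mpr ht) (by rw [key]; ring)

variable {K : Type*} [Field K]

theorem det_cauchy_eq_inv_mul_det_eval_nodal_erase (z t : Fin n → K) (hzt : ∀ ℓ k, z ℓ ≠ t k) :
    (of fun ℓ k => (z ℓ - t k)⁻¹).det =
      (∏ ℓ, (nodal univ t).eval (z ℓ))⁻¹ *
        (of fun ℓ k => (nodal (univ.erase k) t).eval (z ℓ)).det := by
  have hrows : (of fun ℓ k => (z ℓ - t k)⁻¹) =
      of fun ℓ k => ((nodal univ t).eval (z ℓ))⁻¹ * (nodal (univ.erase k) t).eval (z ℓ) := by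
    ext ℓ k
    rw [of_apply, of_apply, inv_sub_eq_eval_nodal_erase_div (mem_univ k)
      fun j _ => hzt ℓ j, div_eq_inv_mul]
  rw [hrows, ← prod_inv_distrib]
  exact det_mul_column _ _

theorem det_cauchy_mul_prod (z t : Fin n → K) (ht : Function.Injective t)
    (hzt : ∀ ℓ k, z ℓ ≠ t k) :
    (of fun ℓ k => (z ℓ - t k)⁻¹).det * ∏ ℓ, ∏ k, (z ℓ - t k) =
      ∏ i, ∏ j ∈ Ioi i, (z j - z i) * (t i - t j) := by
  have hnodal : ∀ ℓ, (nodal univ t).eval (z ℓ) = ∏ k, (z ℓ - t k) := fun ℓ => eval_nodal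
  have hne : ∏ ℓ, (nodal univ t).eval (z ℓ) ≠ 0 :=
    prod_ne_zero_iff.mpr fun ℓ _ => eval_nodal_not_at_node fun k _ => hzt ℓ k
  rw [det_cauchy_eq_inv_mul_det_eval_nodal_erase z t hzt,
    det_eval_nodal_erase_of_injective z t ht, det_vandermonde]
  simp_rw [← hnodal, prod_mul_distrib]
  field_simp

end Matrix

/-- Cauchy determinant formula: for pairwise distinct `z₁,…,z_n`, pairwise
distinct `t₁,…,t_n` with `z_ℓ ≠ t_k`, the determinant of the Cauchy matrix
`(1/(z_ℓ - t_k))` equals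
`(-1)^{n(n-1)/2} ∏_{p<q} (z_p - z_q)(t_p - t_q) / ∏_{ℓ,k} (z_ℓ - t_k)`,
and in particular is nonzero. -/
theorem stmt14 {n : ℕ} (z t : Fin n → ℂ)
    (hz : Function.Injective z) (ht : Function.Injective t)
    (hzt : ∀ ℓ k, z ℓ ≠ t k) :
    (Matrix.of fun ℓ k => (z ℓ - t k)⁻¹).det
      = (-1 : ℂ) ^ (n * (n - 1) / 2) *
        (∏ p, ∏ q ∈ Finset.Ioi p, (z p - z q) * (t p - t q)) /
        ∏ ℓ, ∏ k, (z ℓ - t k) ∧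
    (Matrix.of fun ℓ k => (z ℓ - t k)⁻¹).det ≠ 0 := by
  have hprod : ∏ ℓ, ∏ k, (z ℓ - t k) ≠ 0 :=
    prod_ne_zero_iff.mpr fun ℓ _ => prod_ne_zero_iff.mpr fun k _ => sub_ne_zero.mpr (hzt ℓ k)
  have hpairs : ∏ i, ∏ j ∈ Ioi i, (z j - z i) * (t i - t j) ≠ 0 :=
    prod_ne_zero_iff.mpr fun i _ => prod_ne_zero_iff.mpr fun j hj =>
      mul_ne_zero (sub_ne_zero.mpr (hz.ne (mem_Ioi.mp hj).ne'))
        (sub_ne_zero.mpr (ht.ne (mem_Ioi.mp hj).ne))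
  have hcauchy := det_cauchy_mul_prod z t ht hzt
  have hsign : ∏ i, ∏ j ∈ Ioi i, (z j - z i) * (t i - t j) =
      (-1) ^ (n * (n - 1) / 2) * ∏ p, ∏ q ∈ Ioi p, (z p - z q) * (t p - t q) := by
    rw [← prod_prod_Ioi_neg]
    simp_rw [← neg_mul, neg_sub]
  refine ⟨eq_div_of_mul_eq hprod (hcauchy.trans hsign), fun hdet => hpairs ?_⟩
  rw [← hcauchy, hdet, zero_mul]
end

section
/- Frobenius's theorem: an n×n complex matrix M has the property that every product m_{1,σ(1)}⋯m_{n,σ(n)} over permutations σ vanishes if and only if there exists ℓ with 1 ≤ ℓ ≤ n and row indices α₁<⋯<α_ℓ and column indices β₁<⋯<β_{n−ℓ+1} such that m_{α_i, β_j} = 0 for all i, j (i.e., M has an ℓ×(n−ℓ+1) zero submatrix). -/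
/-- Frobenius's theorem: every permutation product `∏ i, M i (σ i)` vanishes
if and only if `M` contains an `ℓ × (n - ℓ + 1)` zero submatrix, i.e. there
are sets of rows and columns with `card rows + card cols = n + 1` on which all
entries of `M` vanish. -/
theorem stmt15 {n : ℕ} (M : Matrix (Fin n) (Fin n) ℂ) :
    (∃ rows cols : Finset (Fin n),
        rows.card + cols.card = n + 1 ∧
        ∀ i ∈ rows, ∀ j ∈ cols, M i j = 0) ↔
    ∀ σ : Equiv.Perm (Fin n), ∏ i, M i (σ i) = 0 := by
  constructor
  · rintro ⟨rows, cols, hcard, hzero⟩ σ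
    have hcc : cols.card ≤ n := le_trans (Finset.card_le_univ _) (by simp)
    have : ∃ i ∈ rows, σ i ∈ cols := by
      by_contra h
      push_neg at h
      have himg : rows.image σ ⊆ colsᶜ := by
        intro j hj
        simp only [Finset.mem_image] at hj
        obtain ⟨i, hi, rfl⟩ := hj
        simpa using h i hi
      have h1 : rows.card ≤ colsᶜ.card := by
        calc rows.card = (rows.image σ).card :=
              (Finset.card_image_of_injective _ σ.injective).symm
          _ ≤ _ := Finset.card_le_card himg
      rw [Finset.card_compl, Fintype.card_fin] at h1
      omega
    obtain ⟨i, hi, hic⟩ := this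
    exact Finset.prod_eq_zero (Finset.mem_univ i) (hzero i hi _ hic)
  · intro h
    classical
    set A : Fin n → Finset (Fin n) := fun i => Finset.univ.filter fun j => M i j ≠ 0 with hA
    have hall : ¬ ∀ s : Finset (Fin n), s.card ≤ (s.biUnion A).card := by
      intro hH
      obtain ⟨f, hfinj, hf⟩ :=
        (Finset.all_card_le_biUnion_card_iff_exists_injective A).mp hH
      have hfb : Function.Bijective f := Finite.injective_iff_bijective.mp hfinj
      have := h (Equiv.ofBijective f hfb)
      rw [Finset.prod_eq_zero_iff] at this
      obtain ⟨i, -, hMi⟩ := this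
      have := hf i
      simp only [hA, Finset.mem_filter] at this
      exact this.2 (by simpa using hMi)
    push_neg at hall
    obtain ⟨R, hR⟩ := hall
    set B := R.biUnion A with hB
    set cols := Bᶜ with hcols
    have hBc : B.card ≤ n := le_trans (Finset.card_le_univ _) (by simp)
    have hcolsc : cols.card = n - B.card := by
      rw [hcols, Finset.card_compl, Fintype.card_fin]
    have hle : n + 1 - cols.card ≤ R.card := by omega
    obtain ⟨rows, hrs, hrc⟩ := Finset.exists_subset_card_eq hle
    refine ⟨rows, cols, by omega, ?_⟩
    intro i hi j hj
    by_contra hne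
    have hjB : j ∈ B := Finset.mem_biUnion.mpr ⟨i, hrs hi, by simp [hA, hne]⟩
    rw [hcols, Finset.mem_compl] at hj
    exact hj hjB
end

section
/- If M ∈ ℂ^{n×n} is not Frobenius-singular, then there exists a choice of pairwise distinct complex numbers t₁,…,t_{2n} such that the matrix S with entries S_{ij} = m_{ij}/(t_i − t_{n+j}) is invertible. -/
/-!
By the Frobenius–König theorem (here: Hall's marriage theorem) some permutation `σ` has
`M i (σ i) ≠ 0` for all `i`. Put `t_i = a_i` and `t_{n+j} = a_{σ⁻¹ j} - ε` with distinct `a_i`.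
Then `ε • S` is, for `ε ≠ 0`, the value of a matrix function continuous at `0` whose value there
is the monomial matrix with entries `M i (σ i)`, so `det S ≠ 0` for all small `ε ≠ 0`.
Taking `a_i ∈ ℝ` and `ε` purely imaginary keeps the `t`'s distinct.
-/

open Filter Topology Matrix Equiv

section

variable {ι : Type*} [Fintype ι]

theorem exists_perm_apply_ne_zero_of_not_exists_zero_block {R : Type*} [Zero R]
    (M : Matrix ι ι R)
    (hM : ¬ ∃ rows cols : Finset ι,
        rows.card + cols.card = Fintype.card ι + 1 ∧ ∀ i ∈ rows, ∀ j ∈ cols, M i j = 0) :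
    ∃ σ : Perm ι, ∀ i, M i (σ i) ≠ 0 := by
  classical
  set N : ι → Finset ι := fun i => {j | M i j ≠ 0}
  have hHall : ∀ s : Finset ι, s.card ≤ (s.biUnion N).card := by
    intro s
    by_contra! hlt
    obtain ⟨rows, hrows, hcard⟩ :=
      Finset.exists_subset_card_eq (s := s) (n := (s.biUnion N).card + 1) hlt
    refine hM ⟨rows, (s.biUnion N)ᶜ, ?_, fun i hi j hj => ?_⟩
    · have := Finset.card_le_univ (s.biUnion N)
      rw [Finset.card_compl, hcard]
      omega
    · by_contra hij
      exact Finset.mem_compl.mp hj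
        (Finset.mem_biUnion.mpr ⟨i, hrows hi, Finset.mem_filter.mpr ⟨Finset.mem_univ _, hij⟩⟩)
  obtain ⟨f, hf_inj, hf⟩ := (Finset.all_card_le_biUnion_card_iff_exists_injective N).mp hHall
  exact ⟨Equiv.ofBijective f (Finite.injective_iff_bijective.mp hf_inj),
    fun i => (Finset.mem_filter.mp (hf i)).2⟩

theorem eventually_det_of_div_sub_sub_ne_zero [DecidableEq ι] {𝕜 : Type*} [NormedField 𝕜]
    (M : Matrix ι ι 𝕜) {σ : Perm ι} (hσ : ∀ i, M i (σ i) ≠ 0) {a b : ι → 𝕜}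
    (hab : ∀ i j, a i = b j ↔ σ i = j) :
    ∀ᶠ ε in 𝓝[≠] 0, (of fun i j => M i j / (a i - (b j - ε))).det ≠ 0 := by
  set A : 𝕜 → Matrix ι ι 𝕜 := fun ε =>
    of fun i j => if σ i = j then M i j else ε * M i j / (a i - (b j - ε))
  have hA_smul : ∀ ε ≠ 0, A ε = ε • of fun i j => M i j / (a i - (b j - ε)) := by
    intro ε hε
    ext i j
    by_cases hij : σ i = j
    · simp [A, hij, (hab i j).mpr hij, mul_div_cancel₀ _ hε]
    · simp [A, hij, mul_div_assoc]
  have hA_zero : A 0 = (diagonal fun i => M i (σ i)).submatrix id σ.symm := by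
    ext i j
    by_cases hij : σ i = j
    · subst hij
      simp [A]
    · simp [A, hij, diagonal, Equiv.eq_symm_apply]
  have hA_cont : ContinuousAt A 0 := by
    refine continuousAt_pi.2 fun i => continuousAt_pi.2 fun j => ?_
    by_cases hij : σ i = j
    · simpa [A, hij] using continuousAt_const
    · have hden : a i - (b j - 0) ≠ 0 := by
        simpa [sub_eq_zero] using (hab i j).not.mpr hij
      simp only [A, of_apply, hij, if_false]
      exact ((continuousAt_id.mul continuousAt_const).div
        (continuousAt_const.sub (continuousAt_const.sub continuousAt_id)) hden)
  have hdet_zero : (A 0).det ≠ 0 := by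
    rw [hA_zero, det_permute', det_diagonal]
    refine mul_ne_zero ?_ (Finset.prod_ne_zero_iff.mpr fun i _ => hσ i)
    rcases Int.units_eq_one_or (Perm.sign σ) with h | h <;> simp [h]
  have hdet_cont : ContinuousAt (fun ε => (A ε).det) 0 :=
    continuous_id.matrix_det.continuousAt.comp hA_cont
  filter_upwards [nhdsWithin_le_nhds (hdet_cont.eventually_ne hdet_zero), self_mem_nhdsWithin]
    with ε hε hε0
  rw [hA_smul ε hε0, det_smul] at hε
  exact right_ne_zero_of_mul hε

end

/-- If `M` is not Frobenius-singular, then there exist pairwise distinct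
`t₁,…,t_{2n}` such that the matrix `S` with entries `M i j / (t_i - t_{n+j})`
is invertible. -/
theorem stmt17 {n : ℕ} (M : Matrix (Fin n) (Fin n) ℂ)
    (hFrob : ¬ ∃ rows cols : Finset (Fin n),
        rows.card + cols.card = n + 1 ∧
        ∀ i ∈ rows, ∀ j ∈ cols, M i j = 0) :
    ∃ t : Fin (n + n) → ℂ, Function.Injective t ∧
      (Matrix.of fun i j : Fin n =>
          M i j / (t (Fin.castAdd n i) - t (Fin.natAdd n j))).det ≠ 0 := by
  obtain ⟨σ, hσ⟩ :=
    exists_perm_apply_ne_zero_of_not_exists_zero_block M (by simpa using hFrob)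
  set a : Fin n → ℂ := fun i => ((i : ℕ) : ℂ)
  have ha : Function.Injective a := Nat.cast_injective.comp Fin.val_injective
  have hdet := eventually_det_of_div_sub_sub_ne_zero M hσ (a := a) (b := fun j => a (σ.symm j))
    fun i j => ha.eq_iff.trans (Equiv.eq_symm_apply σ)
  have himag : Tendsto (fun s : ℝ => (s : ℂ) * Complex.I) (𝓝[≠] 0) (𝓝[≠] 0) :=
    tendsto_nhdsWithin_iff.2 ⟨((Complex.continuous_ofReal.mul continuous_const).tendsto' 0 0
      (by simp)).mono_left nhdsWithin_le_nhds,
      eventually_nhdsWithin_of_forall fun s hs => by simpa using hs⟩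
  obtain ⟨s, hs_det, hs⟩ := ((himag.eventually hdet).and self_mem_nhdsWithin).exists
  refine ⟨Fin.append a fun j => a (σ.symm j) - s * Complex.I,
    Fin.append_injective_iff.2 ⟨ha, fun j j' h => σ.symm.injective (ha (by simpa using h)),
      fun i j h => hs ?_⟩, by simpa only [Fin.append_left, Fin.append_right] using hs_det⟩
  simpa [a] using congrArg Complex.im h
end

section
/- Suppose A_P, A_Z ∈ ℂ^{n×n} are diagonal with disjoint spectra, F ∈ ℂ^{m×n}, G ∈ ℂ^{n×m}, and S ∈ ℂ^{n×n} is invertible and satisfies A_Z S − S A_P = G F. Define R(z) = I − F(zI − A_P)^{-1} S^{-1} G for z not an eigenvalue of A_P. Then for z not an eigenvalue of A_P and ω not an eigenvalue of A_Z, R(z)·(I + F S^{-1}(ωI − A_Z)^{-1} G) = I + (z−ω) F (zI − A_P)^{-1} S^{-1} (ωI − A_Z)^{-1} G. -/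
set_option maxHeartbeats 1000000

/-- Joint representation identity: if `A_Z S - S A_P = G F` with `S`
invertible, `A_P = diag a`, `A_Z = diag b` with all the `a i`, `b j` pairwise
distinct, and `z` avoids the `a i`, `ω` avoids the `b i`, then
`R(z) (1 + F S⁻¹ (ω - A_Z)⁻¹ G) = 1 + (z - ω) F (z - A_P)⁻¹ S⁻¹ (ω - A_Z)⁻¹ G`
where `R(z) = 1 - F (z - A_P)⁻¹ S⁻¹ G`. -/
theorem stmt18 {m n : ℕ} (a b : Fin n → ℂ)
    (ha : Function.Injective a) (hb : Function.Injective b)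
    (hab : ∀ i j, a i ≠ b j)
    (F : Matrix (Fin m) (Fin n) ℂ) (G : Matrix (Fin n) (Fin m) ℂ)
    (S : Matrix (Fin n) (Fin n) ℂ) (hS : IsUnit S)
    (hLyap : Matrix.diagonal b * S - S * Matrix.diagonal a = G * F)
    (z ω : ℂ) (hz : ∀ i, z ≠ a i) (hω : ∀ i, ω ≠ b i) :
    (1 - F * (z • 1 - Matrix.diagonal a)⁻¹ * S⁻¹ * G) *
      (1 + F * S⁻¹ * (ω • 1 - Matrix.diagonal b)⁻¹ * G)
    = 1 + (z - ω) •
        (F * (z • 1 - Matrix.diagonal a)⁻¹ * S⁻¹ *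
          (ω • 1 - Matrix.diagonal b)⁻¹ * G) := by
  set P : Matrix (Fin n) (Fin n) ℂ := z • 1 - Matrix.diagonal a with hPdef
  set Z : Matrix (Fin n) (Fin n) ℂ := ω • 1 - Matrix.diagonal b with hZdef
  have hPdiag : P = Matrix.diagonal (fun i => z - a i) := by
    simp [hPdef, Matrix.smul_one_eq_diagonal, Matrix.diagonal_sub]
  have hZdiag : Z = Matrix.diagonal (fun i => ω - b i) := by
    simp [hZdef, Matrix.smul_one_eq_diagonal, Matrix.diagonal_sub]
  have hP : IsUnit P := by
    rw [hPdiag, Matrix.isUnit_iff_isUnit_det, Matrix.det_diagonal]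
    exact isUnit_iff_ne_zero.2 (Finset.prod_ne_zero_iff.2 fun i _ => sub_ne_zero.2 (hz i))
  have hZ : IsUnit Z := by
    rw [hZdiag, Matrix.isUnit_iff_isUnit_det, Matrix.det_diagonal]
    exact isUnit_iff_ne_zero.2 (Finset.prod_ne_zero_iff.2 fun i _ => sub_ne_zero.2 (hω i))
  have hPd := (Matrix.isUnit_iff_isUnit_det P).1 hP
  have hZd := (Matrix.isUnit_iff_isUnit_det Z).1 hZ
  have hSd := (Matrix.isUnit_iff_isUnit_det S).1 hS
  have hP1 : P * P⁻¹ = 1 := Matrix.mul_nonsing_inv P hPd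
  have hP2 : P⁻¹ * P = 1 := Matrix.nonsing_inv_mul P hPd
  have hZ1 : Z * Z⁻¹ = 1 := Matrix.mul_nonsing_inv Z hZd
  have hZ2 : Z⁻¹ * Z = 1 := Matrix.nonsing_inv_mul Z hZd
  have hS1 : S * S⁻¹ = 1 := Matrix.mul_nonsing_inv S hSd
  have hS2 : S⁻¹ * S = 1 := Matrix.nonsing_inv_mul S hSd
  have c1 : ∀ X : Matrix (Fin n) (Fin n) ℂ, S * (S⁻¹ * X) = X := fun X => by
    rw [← Matrix.mul_assoc, hS1, Matrix.one_mul]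
  have c2 : ∀ X : Matrix (Fin n) (Fin n) ℂ, S⁻¹ * (S * X) = X := fun X => by
    rw [← Matrix.mul_assoc, hS2, Matrix.one_mul]
  have c3 : ∀ X : Matrix (Fin n) (Fin n) ℂ, P⁻¹ * (P * X) = X := fun X => by
    rw [← Matrix.mul_assoc, hP2, Matrix.one_mul]
  have hGF : G * F = (ω - z) • S - Z * S + S * P := by
    rw [← hLyap, hPdef, hZdef]
    simp [sub_mul, mul_sub, smul_sub, sub_smul, Matrix.smul_mul, Matrix.mul_smul]
  have key : P⁻¹ * (S⁻¹ * (G * F) * S⁻¹) * Z⁻¹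
      = (ω - z) • (P⁻¹ * S⁻¹ * Z⁻¹) - P⁻¹ * S⁻¹ + S⁻¹ * Z⁻¹ := by
    rw [hGF]
    simp only [Matrix.mul_sub, Matrix.sub_mul, Matrix.mul_add, Matrix.add_mul,
      Matrix.mul_smul, Matrix.smul_mul, Matrix.mul_assoc]
    simp only [c1, c2, c3, hZ1, Matrix.mul_one]
  have expand : (1 - F * P⁻¹ * S⁻¹ * G) * (1 + F * S⁻¹ * Z⁻¹ * G)
      = 1 + F * S⁻¹ * Z⁻¹ * G - F * P⁻¹ * S⁻¹ * G
        - F * (P⁻¹ * (S⁻¹ * (G * F) * S⁻¹) * Z⁻¹) * G := by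
    simp only [Matrix.mul_add, Matrix.add_mul, Matrix.sub_mul, Matrix.mul_sub,
      Matrix.mul_one, Matrix.one_mul, Matrix.mul_assoc]
    abel
  rw [expand, key]
  simp only [Matrix.mul_sub, Matrix.sub_mul, Matrix.mul_add, Matrix.add_mul,
    Matrix.mul_smul, Matrix.smul_mul]
  rw [show (ω - z) = -(z - ω) by ring]
  simp only [neg_smul, Matrix.mul_assoc]
  abel
end

section
/- With the notation above (A_Z S − S A_P = GF, S invertible), the function R(z) = I − F(zI−A_P)^{-1}S^{-1}G satisfies R'(z)R(z)^{-1} = F(zI−A_P)^{-1}S^{-1}(zI−A_Z)^{-1}G for all z outside the spectra of A_P and A_Z. -/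
/-- Logarithmic derivative identity: with `A_Z S - S A_P = G F`, `S`
invertible, and `z` outside the spectra of `A_P = diag a` and `A_Z = diag b`,
`R'(z) R(z)⁻¹ = F (z - A_P)⁻¹ S⁻¹ (z - A_Z)⁻¹ G`, stated as the algebraic
identity `F (z-A_P)⁻² S⁻¹ G · (1 + F S⁻¹ (z-A_Z)⁻¹ G)
  = F (z-A_P)⁻¹ S⁻¹ (z-A_Z)⁻¹ G`. -/
theorem stmt19 {m n : ℕ} (a b : Fin n → ℂ)
    (ha : Function.Injective a) (hb : Function.Injective b)
    (hab : ∀ i j, a i ≠ b j)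
    (F : Matrix (Fin m) (Fin n) ℂ) (G : Matrix (Fin n) (Fin m) ℂ)
    (S : Matrix (Fin n) (Fin n) ℂ) (hS : IsUnit S)
    (hLyap : Matrix.diagonal b * S - S * Matrix.diagonal a = G * F)
    (z : ℂ) (hza : ∀ i, z ≠ a i) (hzb : ∀ i, z ≠ b i) :
    (F * (z • 1 - Matrix.diagonal a)⁻¹ * (z • 1 - Matrix.diagonal a)⁻¹ *
        S⁻¹ * G) *
      (1 + F * S⁻¹ * (z • 1 - Matrix.diagonal b)⁻¹ * G)
    = F * (z • 1 - Matrix.diagonal a)⁻¹ * S⁻¹ *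
        (z • 1 - Matrix.diagonal b)⁻¹ * G := by
  set P := z • (1 : Matrix (Fin n) (Fin n) ℂ) - Matrix.diagonal a with hPdef
  set Z := z • (1 : Matrix (Fin n) (Fin n) ℂ) - Matrix.diagonal b with hZdef
  have hPd : P = Matrix.diagonal (fun i => z - a i) := by
    ext i j
    by_cases h : i = j <;>
      simp [hPdef, Matrix.diagonal_apply, Matrix.one_apply, Matrix.sub_apply, h]
  have hZd : Z = Matrix.diagonal (fun i => z - b i) := by
    ext i j
    by_cases h : i = j <;>
      simp [hZdef, Matrix.diagonal_apply, Matrix.one_apply, Matrix.sub_apply, h]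
  have hPu : IsUnit P.det := by
    rw [hPd, Matrix.det_diagonal, isUnit_iff_ne_zero]
    exact Finset.prod_ne_zero_iff.2 fun i _ => sub_ne_zero.2 (hza i)
  have hZu : IsUnit Z.det := by
    rw [hZd, Matrix.det_diagonal, isUnit_iff_ne_zero]
    exact Finset.prod_ne_zero_iff.2 fun i _ => sub_ne_zero.2 (hzb i)
  have h1 : P⁻¹ * P = 1 := Matrix.nonsing_inv_mul P hPu
  have h2 : Z * Z⁻¹ = 1 := Matrix.mul_nonsing_inv Z hZu
  have h3 : S⁻¹ * S = 1 := Matrix.nonsing_inv_mul S ((Matrix.isUnit_iff_isUnit_det S).1 hS)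
  have h4 : S * S⁻¹ = 1 := Matrix.mul_nonsing_inv S ((Matrix.isUnit_iff_isUnit_det S).1 hS)
  have hGF : G * F = S * P - Z * S := by
    rw [hPdef, hZdef, ← hLyap]; noncomm_ring
  rw [Matrix.mul_add, Matrix.mul_one]
  simp only [Matrix.mul_assoc]
  set X := S⁻¹ * (Z⁻¹ * G) with hX
  have c1 : S * X = Z⁻¹ * G := by rw [hX, ← Matrix.mul_assoc, h4, Matrix.one_mul]
  have c2 : G * (F * X) = S * (P * X) - G := by
    have h := congrArg (fun M => M * X) hGF
    simp only [Matrix.sub_mul, Matrix.mul_assoc] at h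
    rw [h, c1, ← Matrix.mul_assoc Z Z⁻¹ G, h2, Matrix.one_mul]
  have c3 : S⁻¹ * (G * (F * X)) = P * X - S⁻¹ * G := by
    rw [c2, Matrix.mul_sub, ← Matrix.mul_assoc S⁻¹ S (P * X), h3, Matrix.one_mul]
  have c4 : P⁻¹ * (P * X - S⁻¹ * G) = X - P⁻¹ * (S⁻¹ * G) := by
    rw [Matrix.mul_sub, ← Matrix.mul_assoc P⁻¹ P X, h1, Matrix.one_mul]
  rw [c3, c4]
  simp only [Matrix.mul_sub, Matrix.mul_assoc]
  abel
end
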